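/- arXiv:2104.12611 — 6 statements merged into one kernel-verified Lean document; each statement's English description precedes it below -/
import Mathlib

section
/- Let 𝔄 = Π_{i=1}^{k} M_{n_i}(ℂ) be a finite direct sum of full matrix algebras, and let π : 𝔄 → M_N(ℂ) be an injective unital star-algebra homomorphism. Then there exist positive integers m₁,…,m_k with Σ_i n_i·m_i = N, a bijection between the index set of size N and the sigma type Σ i, (Fin n_i × Fin m_i), and a unitary matrix U ∈ M_N(ℂ), such that for every x = (x₁,…,x_k) ∈ 𝔄, π(x) = U · D(x) · U*, where D(x) is (under the index bijection) the block-diagonal matrix ⊕_{i=1}^{k} (x_i ⊗ I_{m_i}), with x_i ⊗ I_{m_i} the Kronecker product of x_i with the m_i×m_i identity. -/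
/-!
The images `P^i_{ab} = π(E^i_{ab})` of the matrix units of `Π i, M_{n_i}(ℂ)` again satisfy the
matrix unit relations. Fix an index `z_i`; the range `V_i` of the projection `P^i_{z_i z_i}` is
nonzero by faithfulness, and `m_i = dim V_i`. For an orthonormal basis `(v^i_t)` of `V_i`, the
vectors `P^i_{a z_i} v^i_t` are orthonormal because `(P^i_{a z})* P^j_{b z} = δ_{ij} δ_{ab} P^i_{z z}`,
and they span `ℂ^N` because `∑ P^i_{aa} = 1`. In this basis `π(x)` acts as `x_i ⊗ 1` on the `i`-th
block, so `U` is the change of basis from the standard one.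
-/

open Matrix
open scoped Kronecker

theorem Pi.single_finsetSum {ι κ : Type*} [DecidableEq ι] {β : ι → Type*}
    [∀ i, AddCommMonoid (β i)] (i : ι) (s : Finset κ) (f : κ → β i) :
    Pi.single i (∑ b ∈ s, f b) = ∑ b ∈ s, Pi.single i (f b) :=
  map_sum (AddMonoidHom.single β i) f s

section PiMatrixUnit

variable {ι : Type*} [DecidableEq ι] {n : ι → Type*} [∀ i, DecidableEq (n i)] {R : Type*}

noncomputable def piMatrixUnit [Zero R] [One R] (i : ι) (a b : n i) :
    ∀ j, Matrix (n j) (n j) R :=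
  Pi.single i (single a b 1)

theorem star_piMatrixUnit [Semiring R] [StarRing R] (i : ι) (a b : n i) :
    star (piMatrixUnit (R := R) i a b) = piMatrixUnit i b a := by
  rw [piMatrixUnit, piMatrixUnit, ← Pi.single_star, star_eq_conjTranspose, conjTranspose_single,
    star_one]

theorem piMatrixUnit_ne_zero [Semiring R] [Nontrivial R] (i : ι) (a b : n i) :
    piMatrixUnit (R := R) i a b ≠ 0 := by
  rw [piMatrixUnit, Ne, Pi.single_eq_zero_iff, ← Matrix.ext_iff.not]
  push Not
  exact ⟨a, b, by simp⟩

variable [∀ i, Fintype (n i)]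

theorem piMatrixUnit_mul_piMatrixUnit [Semiring R] (i : ι) (a b c d : n i) :
    piMatrixUnit (R := R) i a b * piMatrixUnit i c d =
      if b = c then piMatrixUnit i a d else 0 := by
  rw [piMatrixUnit, piMatrixUnit, ← Pi.single_mul]
  split_ifs with h
  · rw [h, single_mul_single_same, one_mul, piMatrixUnit]
  · rw [single_mul_single_of_ne _ _ _ _ h, Pi.single_zero]

theorem piMatrixUnit_mul_piMatrixUnit_of_ne [Semiring R] {i j : ι} (h : i ≠ j)
    (a b : n i) (c d : n j) :
    piMatrixUnit (R := R) i a b * piMatrixUnit j c d = 0 := by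
  rw [piMatrixUnit, piMatrixUnit, ← Pi.single_mul_left, Pi.single_eq_of_ne h, mul_zero,
    Pi.single_zero]

theorem sum_piMatrixUnit_self [Fintype ι] [Semiring R] :
    ∑ i, ∑ a, piMatrixUnit (R := R) (n := n) i a a = 1 := by
  simp_rw [piMatrixUnit, ← Pi.single_finsetSum, sum_single_one]
  exact Finset.univ_sum_single 1

theorem mul_piMatrixUnit [Semiring R] (x : ∀ j, Matrix (n j) (n j) R) (i : ι) (a c : n i) :
    x * piMatrixUnit i a c = ∑ b, x i b a • piMatrixUnit i b c := by
  have hcol : x i * single a c 1 = ∑ b, x i b a • single b c 1 := by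
    ext r s
    simp [Matrix.sum_apply, single, mul_apply, ite_and]
  rw [piMatrixUnit, ← Pi.single_mul_right, hcol, Pi.single_finsetSum]
  simp only [Pi.single_smul, piMatrixUnit]

end PiMatrixUnit

theorem Matrix.sum_blockDiagonal'_kronecker_one_smul {ι R M : Type*} [DecidableEq ι]
    {n κ : ι → Type*} [Fintype ι] [∀ i, Fintype (n i)] [∀ i, Fintype (κ i)]
    [∀ i, DecidableEq (κ i)] [Semiring R] [AddCommMonoid M] [Module R M]
    (x : ∀ i, Matrix (n i) (n i) R) (v : (Σ i, n i × κ i) → M) (i : ι) (a : n i) (t : κ i) :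
    ∑ τ, blockDiagonal' (fun i => x i ⊗ₖ (1 : Matrix (κ i) (κ i) R)) τ ⟨i, a, t⟩ • v τ =
      ∑ b, x i b a • v ⟨i, b, t⟩ := by
  rw [Fintype.sum_sigma, Finset.sum_eq_single i, Fintype.sum_prod_type]
  · simp [blockDiagonal'_apply_eq, one_apply, ite_smul]
  · intro j _ hj
    simp [blockDiagonal'_apply_ne _ _ _ hj]
  · simp

theorem Matrix.eq_toMatrix_mul_mul_conjTranspose {𝕜 m n : Type*} [RCLike 𝕜] [Fintype m]
    [Fintype n] [DecidableEq n] (A : Matrix n n 𝕜)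
    (b : OrthonormalBasis m 𝕜 (EuclideanSpace 𝕜 n)) (D : Matrix m m 𝕜)
    (h : ∀ σ, toEuclideanCLM (𝕜 := 𝕜) A (b σ) = ∑ τ, D τ σ • b τ) :
    A = (EuclideanSpace.basisFun n 𝕜).toBasis.toMatrix b * D *
      ((EuclideanSpace.basisFun n 𝕜).toBasis.toMatrix b)ᴴ := by
  set U := (EuclideanSpace.basisFun n 𝕜).toBasis.toMatrix b
  have hAU : A * U = U * D := by
    ext j σ
    have hcol := congrArg (fun v => v j) (h σ)
    simp only [ofLp_toEuclideanCLM, WithLp.ofLp_sum, WithLp.ofLp_smul, Finset.sum_apply,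
      Pi.smul_apply, smul_eq_mul] at hcol
    simpa [U, mul_apply, Module.Basis.toMatrix_apply, mulVec, dotProduct, mul_comm] using hcol
  calc A = A * (U * Uᴴ) := by
        rw [OrthonormalBasis.toMatrix_orthonormalBasis_self_mul_conjTranspose, Matrix.mul_one]
    _ = U * D * Uᴴ := by rw [← Matrix.mul_assoc, hAU]

section MatrixUnitBasis

variable {𝕜 H : Type*} [RCLike 𝕜] [NormedAddCommGroup H] [InnerProductSpace 𝕜 H] [CompleteSpace H]

theorem StarAlgHom.inner_apply_left {A : Type*} [Semiring A] [Algebra 𝕜 A] [Star A]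
    (ρ : A →⋆ₐ[𝕜] (H →L[𝕜] H)) (x : A) (v w : H) :
    inner 𝕜 (ρ x v) w = inner 𝕜 v (ρ (star x) w) := by
  rw [map_star, ContinuousLinearMap.star_eq_adjoint, ContinuousLinearMap.adjoint_inner_right]

variable {ι : Type*} [DecidableEq ι] {n : ι → Type*} [∀ i, Fintype (n i)]
  [∀ i, DecidableEq (n i)] (ρ : (∀ i, Matrix (n i) (n i) 𝕜) →⋆ₐ[𝕜] (H →L[𝕜] H)) (z : ∀ i, n i)

noncomputable def multiplicitySpace (i : ι) : Submodule 𝕜 H :=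
  LinearMap.range (ρ (piMatrixUnit i (z i) (z i)) : H →ₗ[𝕜] H)

variable {ρ z}

theorem multiplicitySpace_ne_bot (hρ : Function.Injective ρ) (i : ι) :
    multiplicitySpace ρ z i ≠ ⊥ := by
  rw [multiplicitySpace, Ne, LinearMap.range_eq_bot, ← ContinuousLinearMap.toLinearMap_zero,
    ContinuousLinearMap.coe_inj, ← map_zero ρ, hρ.eq_iff]
  exact piMatrixUnit_ne_zero i _ _

theorem apply_of_mem_multiplicitySpace {i : ι} {w : H} (hw : w ∈ multiplicitySpace ρ z i) :
    ρ (piMatrixUnit i (z i) (z i)) w = w := by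
  obtain ⟨v, rfl⟩ := hw
  rw [ContinuousLinearMap.coe_coe, ← mul_apply_eq_comp, ← map_mul,
    piMatrixUnit_mul_piMatrixUnit, if_pos rfl]

theorem apply_piMatrixUnit_mem_multiplicitySpace (i : ι) (a : n i) (y : H) :
    ρ (piMatrixUnit i (z i) a) y ∈ multiplicitySpace ρ z i := by
  refine ⟨ρ (piMatrixUnit i (z i) a) y, ?_⟩
  rw [ContinuousLinearMap.coe_coe, ← mul_apply_eq_comp, ← map_mul,
    piMatrixUnit_mul_piMatrixUnit, if_pos rfl]

variable {κ : ι → Type*} [∀ i, Fintype (κ i)]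
  (B : ∀ i, OrthonormalBasis (κ i) 𝕜 (multiplicitySpace ρ z i))

variable (ρ z) in
noncomputable def matrixUnitVector (σ : Σ i, n i × κ i) : H :=
  ρ (piMatrixUnit σ.1 σ.2.1 (z σ.1)) (B σ.1 σ.2.2)

theorem orthonormal_matrixUnitVector : Orthonormal 𝕜 (matrixUnitVector ρ z B) := by
  classical
  rw [orthonormal_iff_ite]
  rintro ⟨i, a, t⟩ ⟨j, b, s⟩
  dsimp only [matrixUnitVector]
  rw [StarAlgHom.inner_apply_left, star_piMatrixUnit, ← mul_apply_eq_comp, ← map_mul]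
  rcases eq_or_ne i j with rfl | hij
  · rw [piMatrixUnit_mul_piMatrixUnit]
    by_cases hab : a = b
    · subst hab
      rw [if_pos rfl, apply_of_mem_multiplicitySpace (B i s).2, ← Submodule.coe_inner,
        orthonormal_iff_ite.mp (B i).orthonormal]
      simp
    · simp [hab]
  · rw [piMatrixUnit_mul_piMatrixUnit_of_ne hij]
    simp [hij]

theorem apply_matrixUnitVector (x : ∀ i, Matrix (n i) (n i) 𝕜) (i : ι) (a : n i) (t : κ i) :
    ρ x (matrixUnitVector ρ z B ⟨i, a, t⟩) = ∑ b, x i b a • matrixUnitVector ρ z B ⟨i, b, t⟩ := by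
  dsimp only [matrixUnitVector]
  rw [← mul_apply_eq_comp, ← map_mul, mul_piMatrixUnit, map_sum, _root_.sum_apply]
  simp only [map_smul, _root_.smul_apply]

variable [Fintype ι]

theorem top_le_span_matrixUnitVector :
    ⊤ ≤ Submodule.span 𝕜 (Set.range (matrixUnitVector ρ z B)) := by
  rintro y -
  have hy : y = ∑ i, ∑ a, ρ (piMatrixUnit i a (z i) * piMatrixUnit i (z i) a) y := by
    calc y = ρ (∑ i, ∑ a, piMatrixUnit i a a) y := by
          rw [sum_piMatrixUnit_self, map_one, one_apply_eq_self]
      _ = _ := by simp only [map_sum, _root_.sum_apply, piMatrixUnit_mul_piMatrixUnit, if_true]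
  rw [hy]
  refine Submodule.sum_mem _ fun i _ => Submodule.sum_mem _ fun a _ => ?_
  rw [map_mul, mul_apply_eq_comp]
  let w : multiplicitySpace ρ z i := ⟨_, apply_piMatrixUnit_mem_multiplicitySpace i a y⟩
  rw [show ρ (piMatrixUnit i (z i) a) y = w from rfl, ← (B i).sum_repr w]
  simp only [Submodule.coe_sum, Submodule.coe_smul, map_sum, map_smul]
  exact Submodule.sum_mem _ fun t _ =>
    Submodule.smul_mem _ _ (Submodule.subset_span ⟨⟨i, a, t⟩, rfl⟩)

noncomputable def matrixUnitBasis : OrthonormalBasis (Σ i, n i × κ i) 𝕜 H :=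
  OrthonormalBasis.mk (orthonormal_matrixUnitVector B) (top_le_span_matrixUnitVector B)

@[simp]
theorem coe_matrixUnitBasis : ⇑(matrixUnitBasis B) = matrixUnitVector ρ z B :=
  OrthonormalBasis.coe_mk _ _

theorem apply_matrixUnitBasis [∀ i, DecidableEq (κ i)] (x : ∀ i, Matrix (n i) (n i) 𝕜)
    (σ : Σ i, n i × κ i) :
    ρ x (matrixUnitBasis B σ) =
      ∑ τ, blockDiagonal' (fun i => x i ⊗ₖ (1 : Matrix (κ i) (κ i) 𝕜)) τ σ •
        matrixUnitBasis B τ := by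
  obtain ⟨i, a, t⟩ := σ
  simp only [coe_matrixUnitBasis, apply_matrixUnitVector, sum_blockDiagonal'_kronecker_one_smul]

end MatrixUnitBasis

/-- Any injective unital star-algebra homomorphism (faithful non-degenerate
finite-dimensional representation) `π : Π i, M_{n i}(ℂ) → M_N(ℂ)` is, up to a
unitary `U` and a relabelling `e` of the `N` indices by `Σ i, Fin (n i) × Fin (m i)`,
the block-diagonal representation `x ↦ ⊕ i, (x i ⊗ I_{m i})` with multiplicities
`m i > 0` satisfying `Σ i, n i * m i = N`. -/
theorem faithful_representation_eq_blockDiagonal_kronecker_conj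
    (k N : ℕ) (n : Fin k → ℕ) (hn : ∀ i, 0 < n i)
    (π : (∀ i : Fin k, Matrix (Fin (n i)) (Fin (n i)) ℂ) →⋆ₐ[ℂ] Matrix (Fin N) (Fin N) ℂ)
    (hinj : Function.Injective π) :
    ∃ m : Fin k → ℕ, (∀ i, 0 < m i) ∧ (∑ i, n i * m i = N) ∧
      ∃ (e : Fin N ≃ (Σ i : Fin k, Fin (n i) × Fin (m i)))
        (U : Matrix (Fin N) (Fin N) ℂ),
        U * Uᴴ = 1 ∧ Uᴴ * U = 1 ∧
        ∀ x : ∀ i : Fin k, Matrix (Fin (n i)) (Fin (n i)) ℂ,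
          π x = U *
            (Matrix.blockDiagonal'
              (fun i => (x i) ⊗ₖ (1 : Matrix (Fin (m i)) (Fin (m i)) ℂ))).submatrix e e
            * Uᴴ := by
  let ρ := (toEuclideanCLM : Matrix (Fin N) (Fin N) ℂ ≃⋆ₐ[ℂ] _).toStarAlgHom.comp π
  have hρ : Function.Injective ρ := toEuclideanCLM.injective.comp hinj
  let z i : Fin (n i) := ⟨0, hn i⟩
  let m i := Module.finrank ℂ (multiplicitySpace ρ z i)
  let B i := stdOrthonormalBasis ℂ (multiplicitySpace ρ z i)
  let b := matrixUnitBasis B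
  have hcard : Fintype.card (Σ i, Fin (n i) × Fin (m i)) = N :=
    (Module.finrank_eq_card_basis b.toBasis).symm.trans finrank_euclideanSpace_fin
  let e := (Fintype.equivFinOfCardEq hcard).symm
  let U := (EuclideanSpace.basisFun (Fin N) ℂ).toBasis.toMatrix (b.reindex e.symm)
  refine ⟨m, fun i => Submodule.one_le_finrank_iff.mpr (multiplicitySpace_ne_bot hρ i),
    by simpa [Fintype.card_sigma] using hcard, e, U,
    OrthonormalBasis.toMatrix_orthonormalBasis_self_mul_conjTranspose _ _,
    OrthonormalBasis.toMatrix_orthonormalBasis_conjTranspose_mul_self _ _, fun x => ?_⟩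
  refine eq_toMatrix_mul_mul_conjTranspose _ _ _ fun l => ?_
  simp only [OrthonormalBasis.reindex_apply, Equiv.symm_symm, submatrix_apply]
  rw [e.sum_comp (fun τ => blockDiagonal' _ τ (e l) • b τ)]
  exact apply_matrixUnitBasis B x (e l)
end

section
/- (Schrödinger's mixture theorem, forward direction.) Let ρ be an n×n complex density matrix with eigenvalues λ₁,…,λ_n (listed with multiplicity, with respect to an orthonormal eigenbasis). Suppose ρ = Σ_{i=1}^{m} |ψ_i⟩⟨ψ_i| for vectors ψ₁,…,ψ_m ∈ ℂⁿ with m ≥ n, and set p_i = ‖ψ_i‖². Then there exists an m×m unitary matrix U such that p_i = Σ_{j=1}^{m} |U_{ij}|² · λ̃_j for all i, where λ̃_j = λ_j for j ≤ n and λ̃_j = 0 for j > n. -/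
open Matrix
open scoped ComplexOrder

/-!
Diagonalize `ρ = V D Vᴴ` and write `ρ = Y Yᴴ`, where the columns of `Y` are the `ψ i`. Then
`C = Vᴴ Y` satisfies `C Cᴴ = D`: its rows are orthogonal with squared norms the eigenvalues,
while its columns have the same norms as those of `Y`, namely `√(p i)`. Normalizing the nonzero
rows of `C` and completing them to an orthonormal basis of `ℂᵐ` gives a unitary `U` with
`C k i = √(λ k) U i k`, hence `p i = ∑ k, |C k i|² = ∑ j, |U i j|² λ̃ j`.
-/

theorem Matrix.sum_vecMulVec_star_eq_mul_conjTranspose {ι n α : Type*} [Fintype ι]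
    [NonUnitalSemiring α] [StarRing α] (ψ : ι → n → α) :
    ∑ i, vecMulVec (ψ i) (star (ψ i)) = (of ψ)ᵀ * ((of ψ)ᵀ)ᴴ := by
  ext a b
  simp [mul_apply, Matrix.sum_apply, vecMulVec_apply]

theorem Matrix.conjTranspose_mul_self_apply_self {κ ι 𝕜 : Type*} [Fintype κ] [RCLike 𝕜]
    (C : Matrix κ ι 𝕜) (i : ι) : (Cᴴ * C) i i = ((∑ k, ‖C k i‖ ^ 2 : ℝ) : 𝕜) := by
  simp [mul_apply, RCLike.conj_mul]

theorem Matrix.sum_norm_sq_mul_apply_of_mem_unitaryGroup {κ ι 𝕜 : Type*} [Fintype κ]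
    [DecidableEq κ] [RCLike 𝕜] {V : Matrix κ κ 𝕜} (hV : V ∈ unitaryGroup κ 𝕜)
    (Y : Matrix κ ι 𝕜) (i : ι) :
    ∑ k, ‖(V * Y) k i‖ ^ 2 = ∑ k, ‖Y k i‖ ^ 2 := by
  have hcol : (V * Y)ᴴ * (V * Y) = Yᴴ * Y := by
    rw [conjTranspose_mul, Matrix.mul_assoc, ← Matrix.mul_assoc Vᴴ, ← star_eq_conjTranspose,
      mem_unitaryGroup_iff'.mp hV, Matrix.one_mul]
  exact_mod_cast (conjTranspose_mul_self_apply_self (V * Y) i).symm.trans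
    ((congrFun₂ hcol i i).trans (conjTranspose_mul_self_apply_self Y i))

section

variable {κ ι 𝕜 : Type*} [RCLike 𝕜] [Fintype ι] [DecidableEq κ]

theorem Matrix.inner_toLp_rows_of_mul_conjTranspose_eq_diagonal {C : Matrix κ ι 𝕜} {μ : κ → ℝ}
    (hC : C * Cᴴ = diagonal fun k => (μ k : 𝕜)) (k l : κ) :
    inner 𝕜 (WithLp.toLp 2 (C k)) (WithLp.toLp 2 (C l)) = if k = l then (μ k : 𝕜) else 0 := by
  have := congrFun₂ hC l k
  simp only [mul_apply, conjTranspose_apply, diagonal_apply] at this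
  rw [EuclideanSpace.inner_toLp_toLp, dotProduct]
  simp only [Pi.star_apply, this, eq_comm (a := l)]
  split_ifs with h <;> simp [h]

theorem Matrix.norm_toLp_row_sq_of_mul_conjTranspose_eq_diagonal {C : Matrix κ ι 𝕜} {μ : κ → ℝ}
    (hC : C * Cᴴ = diagonal fun k => (μ k : 𝕜)) (k : κ) :
    ‖WithLp.toLp 2 (C k)‖ ^ 2 = μ k := by
  have := inner_toLp_rows_of_mul_conjTranspose_eq_diagonal hC k k
  rw [if_pos rfl, inner_self_eq_norm_sq_to_K] at this
  exact_mod_cast this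

theorem Matrix.exists_mem_unitaryGroup_of_mul_conjTranspose_eq_diagonal [DecidableEq ι]
    {f : κ → ι} (hf : f.Injective) {C : Matrix κ ι 𝕜} {μ : κ → ℝ}
    (hC : C * Cᴴ = diagonal fun k => (μ k : 𝕜)) :
    ∃ U ∈ unitaryGroup ι 𝕜, ∀ k i, C k i = √(μ k) * U i (f k) := by
  have hμ k : 0 ≤ μ k := norm_toLp_row_sq_of_mul_conjTranspose_eq_diagonal hC k ▸ by positivity
  have hsqrt k (hk : μ k ≠ 0) : (√(μ k) : 𝕜) ≠ 0 := by
    exact_mod_cast (Real.sqrt_pos.mpr ((hμ k).lt_of_ne' hk)).ne'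
  set w : κ → EuclideanSpace 𝕜 ι := fun k => ((√(μ k) : 𝕜))⁻¹ • WithLp.toLp 2 (C k)
  have hw k l (hk : μ k ≠ 0) : inner 𝕜 (w k) (w l) = if k = l then 1 else 0 := by
    simp only [w, inner_smul_left, inner_smul_right,
      inner_toLp_rows_of_mul_conjTranspose_eq_diagonal hC]
    split_ifs with h
    · subst h
      have hsq : (μ k : 𝕜) = √(μ k) * √(μ k) := by
        rw [← RCLike.ofReal_mul, Real.mul_self_sqrt (hμ k)]
      rw [map_inv₀, RCLike.conj_ofReal, hsq]
      field_simp [hsqrt k hk]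
    · simp
  have hv : Orthonormal 𝕜 ((f '' {k | μ k ≠ 0}).domRestrict (Function.extend f w 0)) := by
    rw [orthonormal_iff_ite]
    rintro ⟨_, k, hk, rfl⟩ ⟨_, l, -, rfl⟩
    simp only [Set.domRestrict_apply, hf.extend_apply, Subtype.ext_iff, hf.eq_iff]
    exact hw k l hk
  -- The columns of `U` are an orthonormal basis extending the normalized nonzero rows of `C`.
  obtain ⟨b, hb⟩ := hv.exists_orthonormalBasis_extension_of_card_eq (by simp)
  refine ⟨(EuclideanSpace.basisFun ι 𝕜).toBasis.toMatrix b.toBasis,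
    (EuclideanSpace.basisFun ι 𝕜).toMatrix_orthonormalBasis_mem_unitary b, fun k i => ?_⟩
  by_cases hk : μ k = 0
  · have hCk : WithLp.toLp 2 (C k) = 0 := by
      rw [← norm_eq_zero, ← sq_eq_zero_iff,
        norm_toLp_row_sq_of_mul_conjTranspose_eq_diagonal hC, hk]
    simp [hk, show C k = 0 from congrArg WithLp.ofLp hCk]
  · have hbk : b (f k) = w k := (hb (f k) ⟨k, hk, rfl⟩).trans (hf.extend_apply _ _ _)
    simp [Module.Basis.toMatrix_apply, hbk, w, mul_inv_cancel_left₀ (hsqrt k hk)]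

end

theorem Fin.sum_mul_dite_val_lt {m n : ℕ} (hm : n ≤ m) (g : Fin m → ℝ) (F : Fin n → ℝ) :
    ∑ j : Fin m, g j * (if h : (j : ℕ) < n then F ⟨j, h⟩ else 0) =
      ∑ k, g (Fin.castLE hm k) * F k := by
  refine (Finset.sum_of_injOn (Fin.castLE hm) (Fin.castLE_injective hm).injOn
    (by simp) (fun j _ hj => ?_) (fun k _ => by simp)).symm
  have : ¬ (j : ℕ) < n := fun h => hj ⟨⟨j, h⟩, by simp, rfl⟩
  simp [this]

theorem schroedinger_mixture_forward_general
    (n m : ℕ) (hm : n ≤ m)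
    (ρ : Matrix (Fin n) (Fin n) ℂ) (hρ : ρ.PosSemidef)
    (ψ : Fin m → (Fin n → ℂ))
    (hdecomp : ρ = ∑ i, Matrix.vecMulVec (ψ i) (star (ψ i)))
    (p : Fin m → ℝ) (hp : ∀ i, p i = ∑ a, ‖ψ i a‖ ^ 2)
    (lam : Fin m → ℝ)
    (hlam : ∀ j : Fin m, lam j = if h : (j : ℕ) < n then hρ.1.eigenvalues ⟨j, h⟩ else 0) :
    ∃ U : Matrix (Fin m) (Fin m) ℂ, U * Uᴴ = 1 ∧ Uᴴ * U = 1 ∧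
      ∀ i, p i = ∑ j, ‖U i j‖ ^ 2 * lam j := by
  set V := hρ.1.eigenvectorUnitary
  set μ := hρ.1.eigenvalues
  set Y : Matrix (Fin n) (Fin m) ℂ := (of ψ)ᵀ
  set C : Matrix (Fin n) (Fin m) ℂ := (↑(star V) : Matrix (Fin n) (Fin n) ℂ) * Y
  have hC : C * Cᴴ = diagonal fun k => (μ k : ℂ) := by
    have hdiag := hρ.1.conjStarAlgAut_star_eigenvectorUnitary
    rw [Unitary.conjStarAlgAut_star_apply] at hdiag
    calc C * Cᴴ = star (V : Matrix _ _ ℂ) * ρ * (V : Matrix _ _ ℂ) := by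
          simp only [C, Y, hdecomp, sum_vecMulVec_star_eq_mul_conjTranspose, conjTranspose_mul,
            Unitary.coe_star, star_eq_conjTranspose, conjTranspose_conjTranspose, Matrix.mul_assoc]
      _ = _ := hdiag
  obtain ⟨U, hU, hCU⟩ := exists_mem_unitaryGroup_of_mul_conjTranspose_eq_diagonal (μ := μ)
    (Fin.castLE_injective hm) hC
  refine ⟨U, mem_unitaryGroup_iff.mp hU, mem_unitaryGroup_iff'.mp hU, fun i => ?_⟩
  calc p i = ∑ a, ‖Y a i‖ ^ 2 := hp i
    _ = ∑ k, ‖C k i‖ ^ 2 := (sum_norm_sq_mul_apply_of_mem_unitaryGroup (star V).2 Y i).symm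
    _ = ∑ k, ‖U i (Fin.castLE hm k)‖ ^ 2 * μ k := by
        refine Finset.sum_congr rfl fun k _ => ?_
        rw [hCU, norm_mul, mul_pow, RCLike.norm_ofReal, sq_abs,
          Real.sq_sqrt (hρ.eigenvalues_nonneg k), mul_comm]
    _ = ∑ j, ‖U i j‖ ^ 2 * lam j := by
        simp only [hlam]
        exact (Fin.sum_mul_dite_val_lt hm (fun j => ‖U i j‖ ^ 2) μ).symm

/-- **Schrödinger's mixture theorem, forward direction.**  If a density matrix `ρ` with
eigenvalues `hρ.1.eigenvalues` (listed with multiplicity) is decomposed as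
`ρ = Σ_{i=1}^m |ψ_i⟩⟨ψ_i|` with `m ≥ n`, and `p i = ‖ψ i‖²`, then there is an `m × m`
unitary `U` with `p i = Σ_j |U i j|² · lam j`, where `lam` is the eigenvalue list padded
with zeros. -/
theorem schroedinger_mixture_forward
    (n m : ℕ) (hm : n ≤ m)
    (ρ : Matrix (Fin n) (Fin n) ℂ) (hρ : ρ.PosSemidef) (htr : ρ.trace = 1)
    (ψ : Fin m → (Fin n → ℂ))
    (hdecomp : ρ = ∑ i, Matrix.vecMulVec (ψ i) (star (ψ i)))
    (p : Fin m → ℝ) (hp : ∀ i, p i = ∑ a, ‖ψ i a‖ ^ 2)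
    (lam : Fin m → ℝ)
    (hlam : ∀ j : Fin m, lam j = if h : (j : ℕ) < n then hρ.1.eigenvalues ⟨j, h⟩ else 0) :
    ∃ U : Matrix (Fin m) (Fin m) ℂ, U * Uᴴ = 1 ∧ Uᴴ * U = 1 ∧
      ∀ i, p i = ∑ j, ‖U i j‖ ^ 2 * lam j :=
  schroedinger_mixture_forward_general n m hm ρ hρ ψ hdecomp p hp lam hlam
end

section
/- (Schrödinger's mixture theorem, converse direction.) Let ρ be an n×n complex density matrix with eigenvalues λ₁,…,λ_n (listed with multiplicity), let m ≥ n, set λ̃_j = λ_j for j ≤ n and λ̃_j = 0 for j > n, and let U be any m×m unitary matrix. Define p_i = Σ_{j=1}^{m} |U_{ij}|² · λ̃_j. Then there exist vectors ψ₁,…,ψ_m ∈ ℂⁿ with ‖ψ_i‖² = p_i for every i and ρ = Σ_{i=1}^{m} |ψ_i⟩⟨ψ_i|. -/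
open Matrix
open scoped ComplexOrder

/-!
Diagonalise `ρ = V D Vᴴ` and let `E : n × m` be the coordinate embedding of `𝕜ⁿ` into `𝕜ᵐ`.
Then `W = V √D E` satisfies `W Wᴴ = ρ` and `Wᴴ W = diag λ̃`: its columns `w_j` are orthogonal
with `‖w_j‖² = λ̃_j`. Put `ψ_i = W (U i) = Σ_j U_ij w_j`, with `U i` the `i`-th row of `U`.
Since `Uᵀ` is unitary, `Σ_i |ψ_i⟩⟨ψ_i| = W Uᵀ (W Uᵀ)ᴴ = W Wᴴ = ρ`, and
`‖ψ_i‖² = ⟨U i, Wᴴ W (U i)⟩ = Σ_j |U_ij|² λ̃_j`.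
-/

namespace Matrix

variable {ι κ μ 𝕜 : Type*} [Fintype ι] [Fintype κ] [RCLike 𝕜]

omit [Fintype ι] in
theorem submatrix_one_mul_conjTranspose_submatrix_one [DecidableEq ι] [DecidableEq κ] {e : ι → κ}
    (he : e.Injective) :
    (1 : Matrix κ κ 𝕜).submatrix e id * ((1 : Matrix κ κ 𝕜).submatrix e id)ᴴ = 1 := by
  rw [conjTranspose_submatrix, conjTranspose_one, ← submatrix_mul _ _ _ _ _ Function.bijective_id,
    Matrix.one_mul, submatrix_one _ he]

omit [Fintype κ] in
theorem conjTranspose_submatrix_one_mul_diagonal_mul_submatrix_one [DecidableEq ι] [DecidableEq κ]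
    {e : ι → κ} (he : e.Injective) (d : ι → 𝕜) :
    ((1 : Matrix κ κ 𝕜).submatrix e id)ᴴ * diagonal d * (1 : Matrix κ κ 𝕜).submatrix e id
      = diagonal (Function.extend e d 0) := by
  ext j k
  simp only [mul_apply, diagonal_apply, one_apply, conjTranspose_apply, submatrix_apply, id]
  rcases em (∃ a, e a = j) with ⟨a, rfl⟩ | hj
  · rw [Finset.sum_eq_single a (fun x _ hx => by simp [he.ne_iff.2 hx]) (by simp)]
    simp [he.extend_apply, eq_comm]
  · simp [not_exists.1 hj]

theorem PosSemidef.exists_mul_conjTranspose_eq_and_conjTranspose_mul_eq_diagonal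
    [DecidableEq ι] [DecidableEq κ] {ρ : Matrix ι ι 𝕜} (hρ : ρ.PosSemidef) {e : ι → κ}
    (he : e.Injective) :
    ∃ W : Matrix ι κ 𝕜, W * Wᴴ = ρ ∧
      Wᴴ * W = diagonal (Function.extend e (RCLike.ofReal ∘ hρ.1.eigenvalues) 0) := by
  set V : Matrix ι ι 𝕜 := (hρ.1.eigenvectorUnitary : Matrix ι ι 𝕜)
  set S : Matrix ι ι 𝕜 := diagonal fun i => (√(hρ.1.eigenvalues i) : 𝕜)
  set E : Matrix ι κ 𝕜 := (1 : Matrix κ κ 𝕜).submatrix e id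
  have hV : Vᴴ * V = 1 := Unitary.coe_star_mul_self hρ.1.eigenvectorUnitary
  have hS : Sᴴ = S := by simp [S, diagonal_conjTranspose]
  have hSS : S * S = diagonal (RCLike.ofReal ∘ hρ.1.eigenvalues) := by
    simp only [S, diagonal_mul_diagonal, ← RCLike.ofReal_mul,
      Real.mul_self_sqrt (hρ.eigenvalues_nonneg _)]
    rfl
  refine ⟨V * S * E, ?_, ?_⟩
  · calc V * S * E * (V * S * E)ᴴ = V * (S * S) * Vᴴ := by
          simp only [conjTranspose_mul, hS, Matrix.mul_assoc]
          rw [← Matrix.mul_assoc E, submatrix_one_mul_conjTranspose_submatrix_one he,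
            Matrix.one_mul]
      _ = ρ := by
          rw [hSS]
          conv_rhs => rw [hρ.1.spectral_theorem, Unitary.conjStarAlgAut_apply]
          rfl
  · calc (V * S * E)ᴴ * (V * S * E) = Eᴴ * (S * S) * E := by
          simp only [conjTranspose_mul, hS, Matrix.mul_assoc]
          rw [← Matrix.mul_assoc Vᴴ, hV, Matrix.one_mul]
      _ = _ := by
          rw [hSS, conjTranspose_submatrix_one_mul_diagonal_mul_submatrix_one he]

omit [Fintype ι] in
theorem sum_vecMulVec_transpose {α : Type*} [NonUnitalNonAssocSemiring α]
    (A : Matrix ι κ α) (B : Matrix κ μ α) : ∑ k, vecMulVec (Aᵀ k) (B k) = A * B := by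
  ext i j
  simp [Matrix.sum_apply, vecMulVec_apply, mul_apply]

omit [Fintype ι] in
theorem sum_vecMulVec_mulVec_of_conjTranspose_mul_self [Fintype μ] [DecidableEq κ]
    {U : Matrix μ κ 𝕜} (hU : Uᴴ * U = 1) (W : Matrix ι κ 𝕜) :
    ∑ i, vecMulVec (W *ᵥ U i) (star (W *ᵥ U i)) = W * Wᴴ := by
  have hcol : ∀ i, W *ᵥ U i = (W * Uᵀ)ᵀ i := fun i => by
    ext a
    simp [mulVec, dotProduct, mul_apply]
  have hUt : Uᵀ * Uᵀᴴ = 1 := by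
    rw [conjTranspose_transpose_eq_transpose_conjTranspose, ← transpose_mul, hU, transpose_one]
  calc ∑ i, vecMulVec (W *ᵥ U i) (star (W *ᵥ U i)) = W * Uᵀ * (W * Uᵀ)ᴴ := by
        simp_rw [hcol]
        exact sum_vecMulVec_transpose _ _
    _ = W * Wᴴ := by
        rw [conjTranspose_mul, Matrix.mul_assoc, ← Matrix.mul_assoc Uᵀ, hUt, Matrix.one_mul]

theorem star_dotProduct_self_eq_sum_norm_sq (v : κ → 𝕜) :
    star v ⬝ᵥ v = ((∑ a, ‖v a‖ ^ 2 : ℝ) : 𝕜) := by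
  simp [dotProduct, RCLike.conj_mul]

theorem sum_norm_sq_mulVec_of_conjTranspose_mul_eq_diagonal [DecidableEq κ] {W : Matrix ι κ 𝕜}
    {d : κ → ℝ} (hW : Wᴴ * W = diagonal fun j => (d j : 𝕜)) (x : κ → 𝕜) :
    ∑ a, ‖(W *ᵥ x) a‖ ^ 2 = ∑ j, ‖x j‖ ^ 2 * d j := by
  apply RCLike.ofReal_injective (K := 𝕜)
  rw [← star_dotProduct_self_eq_sum_norm_sq, star_mulVec, dotProduct_mulVec, vecMul_vecMul, hW]
  simp only [dotProduct, vecMul_diagonal, Pi.star_apply, RCLike.star_def]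
  push_cast
  refine Finset.sum_congr rfl fun j _ => ?_
  rw [← RCLike.conj_mul]
  ring

end Matrix

theorem Fin.extend_castLE_apply {α : Type*} [Zero α] {n m : ℕ} (hm : n ≤ m) (f : Fin n → α)
    (j : Fin m) :
    Function.extend (Fin.castLE hm) f 0 j = if h : (j : ℕ) < n then f ⟨j, h⟩ else 0 := by
  split_ifs with h
  · exact (Fin.castLE_injective hm).extend_apply f 0 ⟨j, h⟩
  · exact Function.extend_apply' _ _ _ fun ⟨a, ha⟩ => h (ha ▸ a.isLt)

theorem schroedinger_mixture_converse_general
    (n m : ℕ) (hm : n ≤ m)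
    (ρ : Matrix (Fin n) (Fin n) ℂ) (hρ : ρ.PosSemidef)
    (lam : Fin m → ℝ)
    (hlam : ∀ j : Fin m, lam j = if h : (j : ℕ) < n then hρ.1.eigenvalues ⟨j, h⟩ else 0)
    (U : Matrix (Fin m) (Fin m) ℂ) (hU' : Uᴴ * U = 1)
    (p : Fin m → ℝ) (hp : ∀ i, p i = ∑ j, ‖U i j‖ ^ 2 * lam j) :
    ∃ ψ : Fin m → (Fin n → ℂ),
      (∀ i, ∑ a, ‖ψ i a‖ ^ 2 = p i) ∧
      ρ = ∑ i, Matrix.vecMulVec (ψ i) (star (ψ i)) := by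
  obtain ⟨W, hWρ, hWW⟩ :=
    hρ.exists_mul_conjTranspose_eq_and_conjTranspose_mul_eq_diagonal (Fin.castLE_injective hm)
  have hpad : Function.extend (Fin.castLE hm) (RCLike.ofReal ∘ hρ.1.eigenvalues) 0 =
      fun j => (lam j : ℂ) := by
    funext j
    rw [Fin.extend_castLE_apply, hlam]
    split_ifs <;> simp
  rw [hpad] at hWW
  refine ⟨fun i => W *ᵥ U i, fun i => ?_, ?_⟩
  · rw [hp, sum_norm_sq_mulVec_of_conjTranspose_mul_eq_diagonal hWW]
  · rw [sum_vecMulVec_mulVec_of_conjTranspose_mul_self hU', hWρ]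

/-- **Schrödinger's mixture theorem, converse direction.**  Given a density matrix `ρ`
with eigenvalue list `lam` (padded with zeros to length `m ≥ n`) and any `m × m`
unitary `U`, setting `p i = Σ_j |U i j|² · lam j` there exist vectors `ψ i ∈ ℂⁿ`
with `‖ψ i‖² = p i` and `ρ = Σ_i |ψ_i⟩⟨ψ_i|`. -/
theorem schroedinger_mixture_converse
    (n m : ℕ) (hm : n ≤ m)
    (ρ : Matrix (Fin n) (Fin n) ℂ) (hρ : ρ.PosSemidef) (htr : ρ.trace = 1)
    (lam : Fin m → ℝ)
    (hlam : ∀ j : Fin m, lam j = if h : (j : ℕ) < n then hρ.1.eigenvalues ⟨j, h⟩ else 0)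
    (U : Matrix (Fin m) (Fin m) ℂ) (hU : U * Uᴴ = 1) (hU' : Uᴴ * U = 1)
    (p : Fin m → ℝ) (hp : ∀ i, p i = ∑ j, ‖U i j‖ ^ 2 * lam j) :
    ∃ ψ : Fin m → (Fin n → ℂ),
      (∀ i, ∑ a, ‖ψ i a‖ ^ 2 = p i) ∧
      ρ = ∑ i, Matrix.vecMulVec (ψ i) (star (ψ i)) :=
  schroedinger_mixture_converse_general n m hm ρ hρ lam hlam U hU' p hp
end

section
/- Let ρ be an n×n complex density matrix and suppose ρ = Σ_{i=1}^{m} p_i |φ_i⟩⟨φ_i| where (p₁,…,p_m) is a probability vector and each φ_i ∈ ℂⁿ is a unit vector. Then H(p) ≥ S_VN(ρ), i.e. the Shannon entropy of the weights of any decomposition of ρ into pure (rank-one) states is at least the von Neumann entropy of ρ. -/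
open Matrix
open scoped ComplexOrder

/-- The Shannon entropy `H(p) = −Σ_i p_i log p_i` (with `0·log 0 = 0`,
which holds since `Real.log 0 = 0`). -/
noncomputable def shannonEntropy {m : ℕ} (p : Fin m → ℝ) : ℝ :=
  -∑ i, p i * Real.log (p i)

open scoped Classical in
/-- The von Neumann entropy `S_VN(ρ) = −Σ_i λ_i log λ_i`, where `λ_i` are the
eigenvalues of the (Hermitian) matrix `ρ` listed with multiplicity. -/
noncomputable def vonNeumannEntropy {ι : Type*} [Fintype ι] [DecidableEq ι]
    (ρ : Matrix ι ι ℂ) : ℝ :=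
  if h : ρ.IsHermitian then -∑ i, h.eigenvalues i * Real.log (h.eigenvalues i) else 0

/-!
Write `ρ = Ψ Ψᴴ`, where the columns of `Ψ` are the vectors `√pᵢ φᵢ`, and let `U` be a unitary
diagonalising `ρ`. Then `A = Ψᴴ U` has orthogonal columns with squared norms the eigenvalues `λₖ`
of `ρ`, and its rows have squared norms `pᵢ`. Hence `Dᵢₖ = |Aᵢₖ|² / λₖ` has column sums `1`
(where `λₖ ≠ 0`), row sums at most `1` (Bessel's inequality), and `p = D λ`. Since
`η(x) = -x log x` is concave with `η(0) = 0`, Jensen's inequality applies to weights of total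
mass at most `1`, and `Σₖ η(λₖ) = Σᵢ Σₖ Dᵢₖ η(λₖ) ≤ Σᵢ η(Σₖ Dᵢₖ λₖ) = Σᵢ η(pᵢ)`.
-/

namespace Real

lemma sum_mul_negMulLog_le_negMulLog_sum {ι : Type*} {s : Finset ι} {w x : ι → ℝ}
    (hw : ∀ i ∈ s, 0 ≤ w i) (hw₁ : ∑ i ∈ s, w i ≤ 1) (hx : ∀ i ∈ s, 0 ≤ x i) :
    ∑ i ∈ s, w i * negMulLog (x i) ≤ negMulLog (∑ i ∈ s, w i * x i) := by
  -- Jensen with the missing mass `1 - ∑ w` put on the point `0`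
  simpa using concaveOn_negMulLog.map_add_sum_le hw (v := 1 - ∑ i ∈ s, w i) (by ring) hx
    (by linarith) (Set.mem_Ici.2 le_rfl)

lemma sum_negMulLog_le_sum_negMulLog_sum_mul {ι κ : Type*} [Fintype ι] [Fintype κ]
    {D : κ → ι → ℝ} {x : ι → ℝ} (hD : ∀ i k, 0 ≤ D i k) (hrow : ∀ i, ∑ k, D i k ≤ 1)
    (hcol : ∀ k, x k ≠ 0 → ∑ i, D i k = 1) (hx : ∀ k, 0 ≤ x k) :
    ∑ k, negMulLog (x k) ≤ ∑ i, negMulLog (∑ k, D i k * x k) :=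
  calc ∑ k, negMulLog (x k) = ∑ k, ∑ i, D i k * negMulLog (x k) := by
        refine Finset.sum_congr rfl fun k _ => ?_
        rcases eq_or_ne (x k) 0 with hk | hk
        · simp [hk]
        · rw [← Finset.sum_mul, hcol k hk, one_mul]
    _ = ∑ i, ∑ k, D i k * negMulLog (x k) := Finset.sum_comm
    _ ≤ ∑ i, negMulLog (∑ k, D i k * x k) := Finset.sum_le_sum fun i _ =>
        sum_mul_negMulLog_le_negMulLog_sum (fun k _ => hD i k) (hrow i) (fun k _ => hx k)

end Real

lemma shannonEntropy_eq_sum_negMulLog {m : ℕ} (p : Fin m → ℝ) :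
    shannonEntropy p = ∑ i, Real.negMulLog (p i) := by
  simp [shannonEntropy, Real.negMulLog]

lemma Matrix.IsHermitian.vonNeumannEntropy_eq_sum_negMulLog {ι : Type*} [Fintype ι]
    [DecidableEq ι] {ρ : Matrix ι ι ℂ} (hρ : ρ.IsHermitian) :
    vonNeumannEntropy ρ = ∑ i, Real.negMulLog (hρ.eigenvalues i) := by
  simp [vonNeumannEntropy, hρ, Real.negMulLog]

namespace Matrix

variable {𝕜 ι κ : Type*} [RCLike 𝕜]

lemma conjTranspose_mul_self_apply_self_s6 [Fintype κ] (A : Matrix κ ι 𝕜) (k : ι) :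
    (Aᴴ * A) k k = ((∑ i, ‖A i k‖ ^ 2 : ℝ) : 𝕜) := by
  simp [mul_apply, RCLike.conj_mul]

lemma mul_conjTranspose_self_apply_self [Fintype ι] (A : Matrix κ ι 𝕜) (i : κ) :
    (A * Aᴴ) i i = ((∑ k, ‖A i k‖ ^ 2 : ℝ) : 𝕜) := by
  simp [mul_apply, RCLike.mul_conj]

lemma sum_smul_vecMulVec_star_eq_mul_conjTranspose [Fintype κ] {p : κ → ℝ}
    (hp : ∀ i, 0 ≤ p i) (φ : κ → ι → 𝕜) :
    ∑ i, (p i : 𝕜) • vecMulVec (φ i) (star (φ i)) =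
      (of fun a i => (√(p i) : 𝕜) * φ i a) * (of fun a i => (√(p i) : 𝕜) * φ i a)ᴴ := by
  ext a b
  simp only [Matrix.sum_apply, Matrix.smul_apply, vecMulVec_apply, mul_apply,
    conjTranspose_apply, of_apply, Pi.star_apply, star_mul', RCLike.star_def,
    RCLike.conj_ofReal, smul_eq_mul]
  refine Finset.sum_congr rfl fun i _ => ?_
  rw [show (p i : 𝕜) = (√(p i) : 𝕜) * (√(p i) : 𝕜) by
    rw [← RCLike.ofReal_mul, Real.mul_self_sqrt (hp i)]]
  ring

section OrthogonalColumns

variable [Fintype κ] [DecidableEq ι] {A : Matrix κ ι 𝕜} {d : ι → ℝ}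

lemma eq_sum_norm_sq_of_conjTranspose_mul_self_eq_diagonal
    (h : Aᴴ * A = diagonal fun k => (d k : 𝕜)) (k : ι) : d k = ∑ i, ‖A i k‖ ^ 2 := by
  have hkk := congr_fun₂ h k k
  rw [conjTranspose_mul_self_apply_self_s6, diagonal_apply_eq] at hkk
  exact_mod_cast hkk.symm

lemma sum_norm_sq_div_le_one_of_conjTranspose_mul_self_eq_diagonal [Fintype ι]
    (h : Aᴴ * A = diagonal fun k => (d k : 𝕜)) (i : κ) : ∑ k, ‖A i k‖ ^ 2 / d k ≤ 1 := by
  classical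
  have hd₀ : ∀ k, 0 ≤ d k := fun k =>
    (eq_sum_norm_sq_of_conjTranspose_mul_self_eq_diagonal h k).symm ▸ by positivity
  -- the normalised nonzero columns of `A` are orthonormal; apply Bessel to the `i`-th basis vector
  let v : {k // d k ≠ 0} → EuclideanSpace 𝕜 κ := fun k =>
    ((√(d k) : 𝕜)⁻¹) • WithLp.toLp 2 (fun j => A j k)
  have hv : Orthonormal 𝕜 v := by
    rw [orthonormal_iff_ite]
    intro k l
    have hkl := congr_fun₂ h k l
    simp only [mul_apply, conjTranspose_apply, diagonal_apply] at hkl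
    simp only [v, inner_smul_left, inner_smul_right, EuclideanSpace.inner_toLp_toLp,
      dotProduct, map_inv₀, RCLike.conj_ofReal, Pi.star_apply, mul_comm (A _ _), hkl,
      Subtype.ext_iff]
    split_ifs with hkl'
    · rw [hkl', ← mul_assoc, ← mul_inv, ← RCLike.ofReal_mul, Real.mul_self_sqrt (hd₀ _),
        inv_mul_cancel₀ (by exact_mod_cast l.2)]
    · simp
  have hb := hv.sum_inner_products_le (s := Finset.univ) (EuclideanSpace.single i (1 : 𝕜))
  simp only [v, inner_smul_left, EuclideanSpace.inner_single_right, one_mul, norm_mul,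
    RCLike.norm_conj, norm_inv, RCLike.norm_ofReal, abs_of_nonneg (Real.sqrt_nonneg _),
    mul_pow, inv_pow, Real.sq_sqrt (hd₀ _), PiLp.norm_single, norm_one, one_pow] at hb
  have hzero : ∑ k : {k // ¬d k ≠ 0}, ‖A i k‖ ^ 2 / d k = 0 :=
    Finset.sum_eq_zero fun k _ => by rw [not_not.mp k.2, div_zero]
  rw [← Fintype.sum_subtype_add_sum_subtype (fun k => d k ≠ 0), hzero, add_zero]
  simpa only [div_eq_inv_mul] using hb

theorem sum_negMulLog_le_sum_negMulLog_sum_norm_sq_of_conjTranspose_mul_self_eq_diagonal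
    [Fintype ι] (h : Aᴴ * A = diagonal fun k => (d k : 𝕜)) :
    ∑ k, Real.negMulLog (d k) ≤ ∑ i, Real.negMulLog (∑ k, ‖A i k‖ ^ 2) := by
  have hd := eq_sum_norm_sq_of_conjTranspose_mul_self_eq_diagonal h
  have hd₀ : ∀ k, 0 ≤ d k := fun k => (hd k).symm ▸ by positivity
  have hDd : ∀ i, ∑ k, ‖A i k‖ ^ 2 / d k * d k = ∑ k, ‖A i k‖ ^ 2 := fun i =>
    Finset.sum_congr rfl fun k _ => div_mul_cancel_of_imp fun hk => by
      have hk' := hd k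
      rw [hk, eq_comm, Finset.sum_eq_zero_iff_of_nonneg fun j _ => by positivity] at hk'
      simpa using hk' i
  refine (Real.sum_negMulLog_le_sum_negMulLog_sum_mul (fun i k => div_nonneg (sq_nonneg _) (hd₀ k))
    (sum_norm_sq_div_le_one_of_conjTranspose_mul_self_eq_diagonal h) (fun k hk => ?_)
    hd₀).trans_eq (Finset.sum_congr rfl fun i _ => congrArg _ (hDd i))
  rw [← Finset.sum_div, ← hd, div_self hk]

end OrthogonalColumns

theorem IsHermitian.sum_negMulLog_eigenvalues_le_of_eq_mul_conjTranspose [Fintype ι]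
    [Fintype κ] [DecidableEq ι] {ρ : Matrix ι ι 𝕜} (hρ : ρ.IsHermitian) {Ψ : Matrix ι κ 𝕜}
    (hΨ : ρ = Ψ * Ψᴴ) :
    ∑ k, Real.negMulLog (hρ.eigenvalues k) ≤ ∑ i, Real.negMulLog (∑ a, ‖Ψ a i‖ ^ 2) := by
  have hdiag := hρ.conjStarAlgAut_star_eigenvectorUnitary
  have hunit : (hρ.eigenvectorUnitary : Matrix ι ι 𝕜) * star hρ.eigenvectorUnitary = 1 :=
    Unitary.coe_mul_star_self _
  simp only [Unitary.conjStarAlgAut_apply, Unitary.coe_star, star_star] at hdiag hunit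
  generalize (hρ.eigenvectorUnitary : Matrix ι ι 𝕜) = U at hdiag hunit
  have hcol : (Ψᴴ * U)ᴴ * (Ψᴴ * U) = diagonal fun k => (hρ.eigenvalues k : 𝕜) := by
    refine .trans ?_ hdiag
    simp only [hΨ, conjTranspose_mul, conjTranspose_conjTranspose, star_eq_conjTranspose,
      Matrix.mul_assoc]
  have hrow : ∀ i, ∑ k, ‖(Ψᴴ * U) i k‖ ^ 2 = ∑ a, ‖Ψ a i‖ ^ 2 := by
    intro i
    have hii := congr_fun₂ (show (Ψᴴ * U) * (Ψᴴ * U)ᴴ = Ψᴴ * Ψ by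
      rw [conjTranspose_mul, conjTranspose_conjTranspose, Matrix.mul_assoc,
        ← Matrix.mul_assoc U, ← star_eq_conjTranspose, hunit, Matrix.one_mul]) i i
    rw [mul_conjTranspose_self_apply_self, conjTranspose_mul_self_apply_self_s6] at hii
    exact_mod_cast hii
  exact (sum_negMulLog_le_sum_negMulLog_sum_norm_sq_of_conjTranspose_mul_self_eq_diagonal
    hcol).trans_eq (Finset.sum_congr rfl fun i _ => by rw [hrow i])

end Matrix

theorem vonNeumannEntropy_le_shannonEntropy_of_pure_decomposition_general
    (n m : ℕ) (ρ : Matrix (Fin n) (Fin n) ℂ) (hρ : ρ.PosSemidef)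
    (p : Fin m → ℝ) (hp0 : ∀ i, 0 ≤ p i)
    (φ : Fin m → (Fin n → ℂ)) (hφ : ∀ i, ∑ a, ‖φ i a‖ ^ 2 = 1)
    (hdecomp : ρ = ∑ i, (p i : ℂ) • Matrix.vecMulVec (φ i) (star (φ i))) :
    vonNeumannEntropy ρ ≤ shannonEntropy p := by
  have hρΨ := hdecomp.trans (sum_smul_vecMulVec_star_eq_mul_conjTranspose hp0 φ)
  rw [hρ.isHermitian.vonNeumannEntropy_eq_sum_negMulLog, shannonEntropy_eq_sum_negMulLog]
  exact (hρ.isHermitian.sum_negMulLog_eigenvalues_le_of_eq_mul_conjTranspose hρΨ).trans_eq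
    (Finset.sum_congr rfl fun i _ => by
      simp [mul_pow, Real.sq_sqrt (hp0 i), ← Finset.mul_sum, hφ i])

/-- The Shannon entropy of the weights of any decomposition of a density matrix `ρ`
into pure (rank-one) states is at least the von Neumann entropy of `ρ`. -/
theorem vonNeumannEntropy_le_shannonEntropy_of_pure_decomposition
    (n m : ℕ) (ρ : Matrix (Fin n) (Fin n) ℂ) (hρ : ρ.PosSemidef) (htr : ρ.trace = 1)
    (p : Fin m → ℝ) (hp0 : ∀ i, 0 ≤ p i) (hp1 : ∑ i, p i = 1)
    (φ : Fin m → (Fin n → ℂ)) (hφ : ∀ i, ∑ a, ‖φ i a‖ ^ 2 = 1)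
    (hdecomp : ρ = ∑ i, (p i : ℂ) • Matrix.vecMulVec (φ i) (star (φ i))) :
    vonNeumannEntropy ρ ≤ shannonEntropy p :=
  vonNeumannEntropy_le_shannonEntropy_of_pure_decomposition_general n m ρ hρ p hp0 φ hφ hdecomp
end

section
/- (Strict concavity of von Neumann entropy.) Let ρ and σ be n×n complex density matrices and λ ∈ (0,1). Then S_VN(λρ + (1−λ)σ) ≥ λ·S_VN(ρ) + (1−λ)·S_VN(σ), with equality if and only if ρ = σ. -/
open Matrix
open scoped ComplexOrder

/-!
Let `U` diagonalize `τ = l ρ + (1 - l) σ` and let `x`, `y` be the diagonals of `ρ`, `σ` in the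
basis `U`, so that the eigenvalues of `τ` are `l x + (1 - l) y`. If `ρ = V diag(p) V*`, then `x` is
`p` transformed by the doubly stochastic matrix `|(V* U)ᵢⱼ|²`, so Jensen's inequality for the
strictly concave `η t = -t log t` gives `S(ρ) ≤ ∑ η(xⱼ)`, with equality only when `U` diagonalizes
`ρ` as well. Concavity of `η` once more gives `l ∑ η(xⱼ) + (1 - l) ∑ η(yⱼ) ≤ S(τ)`, strictly unless
`x = y`. In the equality case `ρ` and `σ` are both diagonal in the basis `U` with the same diagonal.
-/

open Real Finset

section Jensen

variable {n : Type*} [Fintype n] [DecidableEq n] {s : Set ℝ} {f : ℝ → ℝ}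
  {M : Matrix n n ℝ} {p : n → ℝ}

theorem sum_sum_mul_of_mem_doublyStochastic (hM : M ∈ doublyStochastic ℝ n) (g : n → ℝ) :
    ∑ j, ∑ i, M i j * g i = ∑ i, g i := by
  rw [sum_comm]
  simp only [← sum_mul, sum_row_of_mem_doublyStochastic hM, one_mul]

theorem ConcaveOn.sum_mul_map_le_map_vecMul (hf : ConcaveOn ℝ s f)
    (hM : M ∈ doublyStochastic ℝ n) (hp : ∀ i, p i ∈ s) (j : n) :
    ∑ i, M i j * f (p i) ≤ f ((p ᵥ* M) j) := by
  simpa [Matrix.vecMul, dotProduct, mul_comm] using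
    hf.le_map_sum (fun i _ => hM.1 i j) (sum_col_of_mem_doublyStochastic hM j) fun i _ => hp i

theorem ConcaveOn.sum_map_le_sum_map_vecMul (hf : ConcaveOn ℝ s f)
    (hM : M ∈ doublyStochastic ℝ n) (hp : ∀ i, p i ∈ s) :
    ∑ i, f (p i) ≤ ∑ j, f ((p ᵥ* M) j) :=
  calc ∑ i, f (p i) = ∑ j, ∑ i, M i j * f (p i) :=
        (sum_sum_mul_of_mem_doublyStochastic hM _).symm
    _ ≤ ∑ j, f ((p ᵥ* M) j) := sum_le_sum fun j _ => hf.sum_mul_map_le_map_vecMul hM hp j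

theorem StrictConcaveOn.eq_vecMul_of_sum_map_eq (hf : StrictConcaveOn ℝ s f)
    (hM : M ∈ doublyStochastic ℝ n) (hp : ∀ i, p i ∈ s)
    (h : ∑ j, f ((p ᵥ* M) j) = ∑ i, f (p i)) {i j : n} (hij : M i j ≠ 0) :
    p i = (p ᵥ* M) j := by
  have hcol : ∑ k, M k j * f (p k) = f ((p ᵥ* M) j) := by
    refine (sum_eq_sum_iff_of_le fun k _ => hf.concaveOn.sum_mul_map_le_map_vecMul hM hp k).1 ?_
      j (mem_univ j)
    rw [sum_sum_mul_of_mem_doublyStochastic hM, h]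
  have hconst : ∀ k, M k j ≠ 0 → p k = p i := by
    have := (hf.map_sum_eq_iff_of_nonneg (t := univ) (fun k _ => hM.1 k j)
      (sum_col_of_mem_doublyStochastic hM j) fun k _ => hp k).1
      (by simpa [Matrix.vecMul, dotProduct, mul_comm] using hcol.symm)
    exact fun k hk => this (mem_univ k) hk (mem_univ i) hij
  calc p i = ∑ k, p i * M k j := by rw [← mul_sum, sum_col_of_mem_doublyStochastic hM j, mul_one]
    _ = (p ᵥ* M) j := by
      refine sum_congr rfl fun k _ => ?_
      by_cases hk : M k j = 0
      · simp [hk]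
      · rw [hconst k hk]

theorem StrictConcaveOn.sum_map_pi {ι : Type*} [Fintype ι] (hf : StrictConcaveOn ℝ s f) :
    StrictConcaveOn ℝ (Set.univ.pi fun _ : ι => s) fun x => ∑ i, f (x i) := by
  refine ⟨convex_pi fun _ _ => hf.1, fun x hx y hy hxy a b ha hb hab => ?_⟩
  obtain ⟨k, hk⟩ := Function.ne_iff.1 hxy
  simp only [Set.mem_univ_pi] at hx hy
  simp only [smul_eq_mul, mul_sum, ← sum_add_distrib, Pi.add_apply, Pi.smul_apply]
  exact sum_lt_sum (fun i _ => hf.concaveOn.2 (hx i) (hy i) ha.le hb.le hab)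
    ⟨k, mem_univ k, hf.2 (hx k) (hy k) hk ha hb hab⟩

end Jensen

theorem vonNeumannEntropy_eq_sum_negMulLog {n : Type*} [Fintype n] [DecidableEq n]
    {A : Matrix n n ℂ} (hA : A.IsHermitian) :
    vonNeumannEntropy A = ∑ i, negMulLog (hA.eigenvalues i) := by
  simp [vonNeumannEntropy, hA, negMulLog]

namespace Matrix

section Unistochastic

variable {𝕜 m n : Type*} [RCLike 𝕜]

def unistochastic (W : Matrix m n 𝕜) : Matrix m n ℝ :=
  of fun i j => ‖W i j‖ ^ 2

theorem unistochastic_apply_ne_zero_iff {W : Matrix m n 𝕜} {i : m} {j : n} :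
    W.unistochastic i j ≠ 0 ↔ W i j ≠ 0 := by
  simp [unistochastic]

variable [Fintype n] [DecidableEq n]

theorem unistochastic_mem_doublyStochastic {W : Matrix n n 𝕜}
    (hW : W ∈ unitary (Matrix n n 𝕜)) :
    W.unistochastic ∈ doublyStochastic ℝ n := by
  rw [mem_doublyStochastic_iff_sum]
  refine ⟨fun i j => sq_nonneg ‖W i j‖, fun i => ?_, fun j => ?_⟩
  · have : (W * star W) i i = (1 : Matrix n n 𝕜) i i := by rw [Unitary.mul_star_self_of_mem hW]
    simp only [mul_apply, star_apply, RCLike.star_def, RCLike.mul_conj, one_apply_eq] at this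
    exact_mod_cast this
  · have : (star W * W) j j = (1 : Matrix n n 𝕜) j j := by rw [Unitary.star_mul_self_of_mem hW]
    simp only [mul_apply, star_apply, RCLike.star_def, RCLike.conj_mul, one_apply_eq] at this
    exact_mod_cast this

theorem star_mul_diagonal_mul_apply_self (W : Matrix n n 𝕜) (p : n → ℝ) (j : n) :
    (star W * diagonal (RCLike.ofReal ∘ p) * W : Matrix n n 𝕜) j j =
      ((p ᵥ* W.unistochastic) j : 𝕜) := by
  rw [mul_apply]
  simp only [mul_diagonal, star_apply, RCLike.star_def, Function.comp_apply, vecMul,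
    dotProduct, unistochastic, of_apply, RCLike.ofReal_sum, RCLike.ofReal_mul, RCLike.ofReal_pow]
  refine sum_congr rfl fun i _ => ?_
  rw [← RCLike.conj_mul]
  ring

end Unistochastic

theorem diagonal_mul_eq_mul_diagonal_of_forall {n R : Type*} [Fintype n] [DecidableEq n]
    [CommSemiring R] {W : Matrix n n R} {p a : n → R} (h : ∀ i j, W i j ≠ 0 → p i = a j) :
    diagonal p * W = W * diagonal a := by
  ext i j
  rw [diagonal_mul, mul_diagonal]
  by_cases hij : W i j = 0
  · simp [hij]
  · rw [h i j hij, mul_comm]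

section ConjDiag

variable {n : Type*} [Fintype n] {A U : Matrix n n ℂ}

def conjDiag (U A : Matrix n n ℂ) : n → ℝ :=
  fun j => ((star U * A * U) j j).re

theorem conjDiag_smul_add_smul (U A B : Matrix n n ℂ) (a b : ℝ) :
    conjDiag U ((a : ℂ) • A + (b : ℂ) • B) = a • conjDiag U A + b • conjDiag U B := by
  ext j
  simp [conjDiag, Matrix.mul_add, Matrix.add_mul]

theorem PosSemidef.conjDiag_nonneg (hA : A.PosSemidef) (U : Matrix n n ℂ) (j : n) :
    0 ≤ conjDiag U A j :=
  (Complex.nonneg_iff.1 (hA.conjTranspose_mul_mul_same U).diag_nonneg).1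

variable [DecidableEq n]

theorem IsHermitian.eigenvalues_eq_conjDiag (hA : A.IsHermitian) :
    hA.eigenvalues = conjDiag hA.eigenvectorUnitary A := by
  ext j
  rw [conjDiag, ← Unitary.conjStarAlgAut_star_apply (S := ℂ),
    hA.conjStarAlgAut_star_eigenvectorUnitary]
  simp

theorem IsHermitian.star_mul_mul_eq (hA : A.IsHermitian) (U : Matrix n n ℂ) :
    star U * A * U =
      star (star (hA.eigenvectorUnitary : Matrix n n ℂ) * U) *
        diagonal (RCLike.ofReal ∘ hA.eigenvalues) *
          (star (hA.eigenvectorUnitary : Matrix n n ℂ) * U) := by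
  conv_lhs => rw [hA.spectral_theorem, Unitary.conjStarAlgAut_apply]
  simp only [star_mul, star_star, mul_assoc]

theorem IsHermitian.conjDiag_eq_vecMul (hA : A.IsHermitian) (U : Matrix n n ℂ) :
    conjDiag U A =
      hA.eigenvalues ᵥ* (star (hA.eigenvectorUnitary : Matrix n n ℂ) * U).unistochastic := by
  ext j
  rw [conjDiag, hA.star_mul_mul_eq, star_mul_diagonal_mul_apply_self]
  exact Complex.ofReal_re _

theorem PosSemidef.vonNeumannEntropy_le_sum_negMulLog_conjDiag (hA : A.PosSemidef)
    (hU : U ∈ unitary (Matrix n n ℂ)) :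
    vonNeumannEntropy A ≤ ∑ j, negMulLog (conjDiag U A j) := by
  have hW := mul_mem (Unitary.star_mem hA.1.eigenvectorUnitary.2) hU
  rw [vonNeumannEntropy_eq_sum_negMulLog hA.1, hA.1.conjDiag_eq_vecMul]
  exact concaveOn_negMulLog.sum_map_le_sum_map_vecMul (unistochastic_mem_doublyStochastic hW)
    fun i => hA.eigenvalues_nonneg i

theorem PosSemidef.star_mul_mul_eq_diagonal_of_vonNeumannEntropy_eq (hA : A.PosSemidef)
    (hU : U ∈ unitary (Matrix n n ℂ))
    (h : ∑ j, negMulLog (conjDiag U A j) = vonNeumannEntropy A) :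
    star U * A * U = diagonal fun j => (conjDiag U A j : ℂ) := by
  set W := star (hA.1.eigenvectorUnitary : Matrix n n ℂ) * U
  have hW : W ∈ unitary (Matrix n n ℂ) :=
    mul_mem (Unitary.star_mem hA.1.eigenvectorUnitary.2) hU
  have hsupp : ∀ i j, W i j ≠ 0 → (hA.1.eigenvalues i : ℂ) = (conjDiag U A j : ℂ) := by
    intro i j hij
    rw [vonNeumannEntropy_eq_sum_negMulLog hA.1, hA.1.conjDiag_eq_vecMul] at h
    rw [hA.1.conjDiag_eq_vecMul]
    exact_mod_cast strictConcaveOn_negMulLog.eq_vecMul_of_sum_map_eq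
      (unistochastic_mem_doublyStochastic hW) (fun i => hA.eigenvalues_nonneg i) h
      (unistochastic_apply_ne_zero_iff.2 hij)
  calc star U * A * U = star W * (diagonal (RCLike.ofReal ∘ hA.1.eigenvalues) * W) := by
        rw [hA.1.star_mul_mul_eq, mul_assoc]
    _ = star W * W * diagonal fun j => (conjDiag U A j : ℂ) := by
        rw [diagonal_mul_eq_mul_diagonal_of_forall (p := RCLike.ofReal ∘ hA.1.eigenvalues) hsupp,
          ← mul_assoc]
    _ = diagonal fun j => (conjDiag U A j : ℂ) := by
        rw [Unitary.star_mul_self_of_mem hW, one_mul]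

theorem PosSemidef.vonNeumannEntropy_mix_le_sum_negMulLog_conjDiag {ρ σ : Matrix n n ℂ}
    (hρ : ρ.PosSemidef) (hσ : σ.PosSemidef) (hU : U ∈ unitary (Matrix n n ℂ)) {l : ℝ}
    (hl : l ∈ Set.Icc (0 : ℝ) 1) :
    l * vonNeumannEntropy ρ + (1 - l) * vonNeumannEntropy σ ≤
      ∑ j, negMulLog (conjDiag U ((l : ℂ) • ρ + ((1 - l : ℝ) : ℂ) • σ) j) := by
  have hmix := strictConcaveOn_negMulLog.sum_map_pi.concaveOn.2 (fun j _ => hρ.conjDiag_nonneg U j)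
    (fun j _ => hσ.conjDiag_nonneg U j) hl.1 (sub_nonneg.2 hl.2) (add_sub_cancel l 1)
  rw [conjDiag_smul_add_smul]
  calc l * vonNeumannEntropy ρ + (1 - l) * vonNeumannEntropy σ
      ≤ l * ∑ j, negMulLog (conjDiag U ρ j) + (1 - l) * ∑ j, negMulLog (conjDiag U σ j) :=
        add_le_add
          (mul_le_mul_of_nonneg_left (hρ.vonNeumannEntropy_le_sum_negMulLog_conjDiag hU) hl.1)
          (mul_le_mul_of_nonneg_left (hσ.vonNeumannEntropy_le_sum_negMulLog_conjDiag hU)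
            (sub_nonneg.2 hl.2))
    _ ≤ _ := hmix

theorem PosSemidef.eq_of_sum_negMulLog_conjDiag_eq_vonNeumannEntropy_mix {ρ σ : Matrix n n ℂ}
    (hρ : ρ.PosSemidef) (hσ : σ.PosSemidef) (hU : U ∈ unitary (Matrix n n ℂ)) {l : ℝ}
    (hl : l ∈ Set.Ioo (0 : ℝ) 1)
    (h : ∑ j, negMulLog (conjDiag U ((l : ℂ) • ρ + ((1 - l : ℝ) : ℂ) • σ) j) =
      l * vonNeumannEntropy ρ + (1 - l) * vonNeumannEntropy σ) :
    ρ = σ := by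
  obtain ⟨hl0, hl1⟩ := hl
  rw [← sub_pos] at hl1
  have hSρ := hρ.vonNeumannEntropy_le_sum_negMulLog_conjDiag hU
  have hSσ := hσ.vonNeumannEntropy_le_sum_negMulLog_conjDiag hU
  rw [conjDiag_smul_add_smul] at h
  have hxy : conjDiag U ρ = conjDiag U σ := by
    by_contra hne
    have := strictConcaveOn_negMulLog.sum_map_pi.2 (fun j _ => hρ.conjDiag_nonneg U j)
      (fun j _ => hσ.conjDiag_nonneg U j) hne hl0 hl1 (add_sub_cancel l 1)
    simp only [smul_eq_mul] at this
    nlinarith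
  -- once `x = y`, equality forces both Jensen steps `S(ρ) ≤ ∑ η(xⱼ)`, `S(σ) ≤ ∑ η(yⱼ)` to be tight
  rw [hxy, ← add_smul, add_sub_cancel, one_smul] at h
  rw [hxy] at hSρ
  have hρ_diag := hρ.star_mul_mul_eq_diagonal_of_vonNeumannEntropy_eq hU (by rw [hxy]; nlinarith)
  have hσ_diag := hσ.star_mul_mul_eq_diagonal_of_vonNeumannEntropy_eq hU (by nlinarith)
  refine (Unitary.mul_right_inj (star ⟨U, hU⟩)).1 ((Unitary.mul_left_inj ⟨U, hU⟩).1 ?_)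
  change star U * ρ * U = star U * σ * U
  rw [hρ_diag, hσ_diag, hxy]

end ConjDiag

end Matrix

theorem vonNeumannEntropy_strictConcave_general
    (n : ℕ) (ρ σ : Matrix (Fin n) (Fin n) ℂ)
    (hρ : ρ.PosSemidef)
    (hσ : σ.PosSemidef)
    (l : ℝ) (hl : l ∈ Set.Ioo (0 : ℝ) 1) :
    l * vonNeumannEntropy ρ + (1 - l) * vonNeumannEntropy σ ≤
      vonNeumannEntropy ((l : ℂ) • ρ + ((1 - l : ℝ) : ℂ) • σ) ∧
    (vonNeumannEntropy ((l : ℂ) • ρ + ((1 - l : ℝ) : ℂ) • σ) =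
        l * vonNeumannEntropy ρ + (1 - l) * vonNeumannEntropy σ ↔ ρ = σ) := by
  set τ := (l : ℂ) • ρ + ((1 - l : ℝ) : ℂ) • σ
  have hτ : τ.IsHermitian :=
    (hρ.1.smul (Complex.conj_ofReal l)).add (hσ.1.smul (Complex.conj_ofReal _))
  have hU := hτ.eigenvectorUnitary.2
  have hSτ : vonNeumannEntropy τ = ∑ j, negMulLog (conjDiag hτ.eigenvectorUnitary τ j) := by
    rw [vonNeumannEntropy_eq_sum_negMulLog hτ, hτ.eigenvalues_eq_conjDiag]
  refine ⟨?_, fun h => ?_, ?_⟩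
  · rw [hSτ]
    exact hρ.vonNeumannEntropy_mix_le_sum_negMulLog_conjDiag hσ hU (Set.Ioo_subset_Icc_self hl)
  · rw [hSτ] at h
    exact hρ.eq_of_sum_negMulLog_conjDiag_eq_vonNeumannEntropy_mix hσ hU hl h
  · rintro rfl
    rw [show τ = ρ by simp only [τ, ← add_smul, Complex.ofReal_sub, Complex.ofReal_one,
      add_sub_cancel, one_smul]]
    ring

/-- **Strict concavity of the von Neumann entropy.**  For density matrices `ρ, σ` and
`l ∈ (0,1)`, `S_VN(l·ρ + (1−l)·σ) ≥ l·S_VN(ρ) + (1−l)·S_VN(σ)`, with equality if and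
only if `ρ = σ`. -/
theorem vonNeumannEntropy_strictConcave
    (n : ℕ) (ρ σ : Matrix (Fin n) (Fin n) ℂ)
    (hρ : ρ.PosSemidef) (hρt : ρ.trace = 1)
    (hσ : σ.PosSemidef) (hσt : σ.trace = 1)
    (l : ℝ) (hl : l ∈ Set.Ioo (0 : ℝ) 1) :
    l * vonNeumannEntropy ρ + (1 - l) * vonNeumannEntropy σ ≤
      vonNeumannEntropy ((l : ℂ) • ρ + ((1 - l : ℝ) : ℂ) • σ) ∧
    (vonNeumannEntropy ((l : ℂ) • ρ + ((1 - l : ℝ) : ℂ) • σ) =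
        l * vonNeumannEntropy ρ + (1 - l) * vonNeumannEntropy σ ↔ ρ = σ) :=
  vonNeumannEntropy_strictConcave_general n ρ σ hρ hσ l hl
end

section
/- Let n₁,…,n_k and m₁,…,m_k be positive integers, N = Σ_i n_i·m_i, identify the index set of size N with Σ i, (Fin n_i × Fin m_i), and let 𝔄 ⊆ M_N(ℂ) be the subalgebra of all block matrices of the form ⊕_{i=1}^{k} (X_i ⊗ I_{m_i}) with X_i ∈ M_{n_i}(ℂ). Then the commutant of 𝔄 in M_N(ℂ), i.e. { T ∈ M_N(ℂ) : T·A = A·T for all A ∈ 𝔄 }, equals the set of all matrices of the form ⊕_{i=1}^{k} (I_{n_i} ⊗ Y_i) with Y_i ∈ M_{m_i}(ℂ). -/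
/-!
Taking `X_i = δ_{ij} I` gives the central projections of `𝔄`; commuting with all of them forces
`T` to be block diagonal. Inside a block, commuting with `E_{ec} ⊗ I` for the matrix
units `E_{ec}` gives `S (a,b) (e,d) = δ_{ae} S (c,b) (c,d)`, i.e. `S = I ⊗ Y`. Conversely
`X ⊗ I` and `I ⊗ Y` commute because both products equal `X ⊗ Y`.
-/

open Matrix
open scoped Kronecker

namespace Matrix

variable {R : Type*}

section Kronecker

variable {α β : Type*} [Fintype α] [Fintype β] [DecidableEq α] [DecidableEq β]

theorem commute_one_kronecker_kronecker_one [CommSemiring R] (Y : Matrix β β R)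
    (X : Matrix α α R) : Commute ((1 : Matrix α α R) ⊗ₖ Y) (X ⊗ₖ (1 : Matrix β β R)) := by
  simp only [Commute, SemiconjBy, ← mul_kronecker_mul, one_mul, mul_one]

variable [Semiring R]

theorem mul_single_kronecker_one_apply (S : Matrix (α × β) (α × β) R) (e f a c : α) (b d : β) :
    (S * (single e f (1 : R) ⊗ₖ (1 : Matrix β β R))) (a, b) (c, d) =
      if f = c then S (a, b) (e, d) else 0 := by
  simp [mul_apply, Fintype.sum_prod_type, single_apply, one_apply, ite_and]

theorem single_kronecker_one_mul_apply (S : Matrix (α × β) (α × β) R) (e f a c : α) (b d : β) :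
    ((single e f (1 : R) ⊗ₖ (1 : Matrix β β R)) * S) (a, b) (c, d) =
      if a = e then S (f, b) (c, d) else 0 := by
  simp [mul_apply, Fintype.sum_prod_type, single_apply, one_apply, ite_and, @eq_comm _ e a]

theorem exists_eq_one_kronecker_of_forall_commute {S : Matrix (α × β) (α × β) R}
    (hS : ∀ X : Matrix α α R, Commute S (X ⊗ₖ (1 : Matrix β β R))) :
    ∃ Y : Matrix β β R, S = (1 : Matrix α α R) ⊗ₖ Y := by
  cases isEmpty_or_nonempty α with
  | inl => exact ⟨0, Subsingleton.elim _ _⟩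
  | inr hα =>
    obtain ⟨c⟩ := hα
    have hentry (a e : α) (b d : β) : S (a, b) (e, d) = if a = e then S (c, b) (c, d) else 0 := by
      have h := congr_fun₂ (hS (single e c (1 : R))) (a, b) (c, d)
      rwa [mul_single_kronecker_one_apply, single_kronecker_one_mul_apply, if_pos rfl] at h
    refine ⟨of fun b d => S (c, b) (c, d), ?_⟩
    ext ⟨a, b⟩ ⟨e, d⟩
    rw [hentry, kronecker_apply, one_apply, of_apply]
    split_ifs <;> simp

end Kronecker

section BlockDiagonal

variable {ι : Type*} [DecidableEq ι] {σ : ι → Type*}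

theorem blockDiagonal'_single_one [∀ i, DecidableEq (σ i)] [Semiring R] (j : ι) :
    blockDiagonal' (Pi.single j (1 : Matrix (σ j) (σ j) R)) =
      diagonal fun x => if x.1 = j then 1 else 0 := by
  ext ⟨i, p⟩ ⟨l, q⟩
  obtain rfl | hil := eq_or_ne i l
  · by_cases hij : i = j
    · subst hij
      simp [one_apply, diagonal_apply]
    · simp [hij, diagonal_apply]
  · simp [blockDiagonal'_apply_ne _ _ _ hil, hil]

theorem pi_single_one_kronecker_one {τ : ι → Type*} [∀ i, DecidableEq (σ i)]
    [∀ i, DecidableEq (τ i)] [Semiring R] (j : ι) :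
    (fun i => (Pi.single j 1 : ∀ i, Matrix (σ i) (σ i) R) i ⊗ₖ (1 : Matrix (τ i) (τ i) R)) =
      Pi.single j 1 := by
  funext i
  obtain rfl | hij := eq_or_ne i j <;> simp [*]

theorem commute_blockDiagonal'_iff [Fintype ι] [∀ i, Fintype (σ i)] [NonUnitalNonAssocSemiring R]
    {D M : ∀ i, Matrix (σ i) (σ i) R} :
    Commute (blockDiagonal' D) (blockDiagonal' M) ↔ ∀ i, Commute (D i) (M i) := by
  simp only [Commute, SemiconjBy, ← blockDiagonal'_mul, blockDiagonal'_inj, funext_iff]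

theorem eq_blockDiagonal'_blockDiag'_of_commute [Fintype ι] [∀ i, Fintype (σ i)]
    [∀ i, DecidableEq (σ i)] [Semiring R] {T : Matrix (Σ i, σ i) (Σ i, σ i) R}
    (hT : ∀ j, Commute T (blockDiagonal' (Pi.single j 1))) :
    T = blockDiagonal' (blockDiag' T) := by
  ext ⟨i, p⟩ ⟨j, q⟩
  obtain rfl | hij := eq_or_ne i j
  · rw [blockDiagonal'_apply_eq, blockDiag'_apply]
  · have h := congr_fun₂ (hT j) ⟨i, p⟩ ⟨j, q⟩
    simp only [blockDiagonal'_single_one, mul_diagonal, diagonal_mul, if_neg hij, zero_mul] at h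
    rw [blockDiagonal'_apply_ne _ _ _ hij]
    simpa using h

end BlockDiagonal

end Matrix

theorem commutant_of_block_kronecker_algebra_general
    (k : ℕ) (n m : Fin k → ℕ) :
    {T : Matrix (Σ i : Fin k, Fin (n i) × Fin (m i)) (Σ i : Fin k, Fin (n i) × Fin (m i)) ℂ |
      ∀ A, (∃ X : ∀ i, Matrix (Fin (n i)) (Fin (n i)) ℂ,
          A = Matrix.blockDiagonal' fun i => (X i) ⊗ₖ (1 : Matrix (Fin (m i)) (Fin (m i)) ℂ)) →
        T * A = A * T} =
    {T | ∃ Y : ∀ i, Matrix (Fin (m i)) (Fin (m i)) ℂ,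
      T = Matrix.blockDiagonal' fun i => (1 : Matrix (Fin (n i)) (Fin (n i)) ℂ) ⊗ₖ (Y i)} := by
  ext T
  constructor
  · intro hT
    have hcomm (X : ∀ i, Matrix (Fin (n i)) (Fin (n i)) ℂ) :
        Commute T (blockDiagonal' fun i => X i ⊗ₖ (1 : Matrix (Fin (m i)) (Fin (m i)) ℂ)) :=
      hT _ ⟨X, rfl⟩
    have hblock : T = blockDiagonal' (blockDiag' T) :=
      eq_blockDiagonal'_blockDiag'_of_commute fun j =>
        pi_single_one_kronecker_one (R := ℂ) (σ := fun i => Fin (n i)) (τ := fun i => Fin (m i))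
          j ▸ hcomm (Pi.single j 1)
    have hdiag (i : Fin k) (X : Matrix (Fin (n i)) (Fin (n i)) ℂ) :
        Commute (blockDiag' T i) (X ⊗ₖ (1 : Matrix (Fin (m i)) (Fin (m i)) ℂ)) := by
      have h := hcomm (Pi.single i X)
      rw [hblock, commute_blockDiagonal'_iff] at h
      simpa only [Pi.single_eq_same] using h i
    choose Y hY using fun i => exists_eq_one_kronecker_of_forall_commute (hdiag i)
    exact ⟨Y, hblock.trans (congrArg blockDiagonal' (funext hY))⟩
  · rintro ⟨Y, rfl⟩ A ⟨X, rfl⟩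
    exact commute_blockDiagonal'_iff.2 fun i => commute_one_kronecker_kronecker_one (Y i) (X i)

/-- The commutant of the block algebra `𝔄 = { ⊕_i (X_i ⊗ I_{m i}) : X_i ∈ M_{n i}(ℂ) }`
inside `M_N(ℂ)` (with the `N = Σ_i n_i·m_i` indices identified with
`Σ i, Fin (n i) × Fin (m i)`) is exactly `{ ⊕_i (I_{n i} ⊗ Y_i) : Y_i ∈ M_{m i}(ℂ) }`. -/
theorem commutant_of_block_kronecker_algebra
    (k : ℕ) (n m : Fin k → ℕ) (hn : ∀ i, 0 < n i) (hm : ∀ i, 0 < m i) :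
    {T : Matrix (Σ i : Fin k, Fin (n i) × Fin (m i)) (Σ i : Fin k, Fin (n i) × Fin (m i)) ℂ |
      ∀ A, (∃ X : ∀ i, Matrix (Fin (n i)) (Fin (n i)) ℂ,
          A = Matrix.blockDiagonal' fun i => (X i) ⊗ₖ (1 : Matrix (Fin (m i)) (Fin (m i)) ℂ)) →
        T * A = A * T} =
    {T | ∃ Y : ∀ i, Matrix (Fin (m i)) (Fin (m i)) ℂ,
      T = Matrix.blockDiagonal' fun i => (1 : Matrix (Fin (n i)) (Fin (n i)) ℂ) ⊗ₖ (Y i)} :=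
  commutant_of_block_kronecker_algebra_general k n m
end
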